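/- arXiv:2105.09056 — 3 statements merged into one kernel-verified Lean document; each statement's English description precedes it below -/
import Mathlib

section
/- For every Hermitian Dirac operator D with zero diagonal on n vertices and every pair of vertices i, j, the noncommutative distance is bounded above by the geodesic distance: d^D(i,j) ≤ ℓ^D(i,j) (as elements of [0,∞]). -/
open scoped ENNReal

/-- The operator norm on square matrices induced by the Euclidean (ℓ²) norm. -/
noncomputable def opNorm {ι : Type*} [Finite ι] (M : Matrix ι ι ℂ) : ℝ :=
  letI := Fintype.ofFinite ι
  letI := Classical.decEq ι
  ‖Matrix.toEuclideanCLM (𝕜 := ℂ) M‖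

/-- The commutator `[D, π(a)]` of a matrix with the diagonal matrix of `a`. -/
noncomputable def commD {ι : Type*} [Finite ι] (D : Matrix ι ι ℂ) (a : ι → ℂ) : Matrix ι ι ℂ :=
  letI := Fintype.ofFinite ι
  letI := Classical.decEq ι
  D * Matrix.diagonal a - Matrix.diagonal a * D

/-- Connes' noncommutative distance associated to the Dirac operator `D`. -/
noncomputable def ncDist {ι : Type*} [Finite ι] (D : Matrix ι ι ℂ) (i j : ι) : ℝ≥0∞ :=
  ⨆ (a : ι → ℂ) (_ : opNorm (commD D a) ≤ 1), ENNReal.ofReal ‖a i - a j‖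

/-- The weight of an edge: the inverse of `|D i j|` (infinite if `D i j = 0`). -/
noncomputable def eWeight {ι : Type*} (D : Matrix ι ι ℂ) (u v : ι) : ℝ≥0∞ :=
  (ENNReal.ofReal ‖D u v‖)⁻¹

/-- Adjacency in the graph `G_D`. -/
def Adjac {ι : Type*} (D : Matrix ι ι ℂ) (u v : ι) : Prop := u ≠ v ∧ D u v ≠ 0

/-- The length of a walk `i :: p` computed with weights `eWeight D`. -/
noncomputable def walkLength {ι : Type*} (D : Matrix ι ι ℂ) : ι → List ι → ℝ≥0∞
  | _, [] => 0
  | u, v :: rest => eWeight D u v + walkLength D v rest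

/-- `i :: p` is a walk from `i` to `j` in the graph `G_D`. -/
def IsWalk {ι : Type*} (D : Matrix ι ι ℂ) (i j : ι) (p : List ι) : Prop :=
  List.Chain (Adjac D) i p ∧ (i :: p).getLast (List.cons_ne_nil _ _) = j

/-- `i` and `j` lie in the same connected component of `G_D`. -/
def Conn {ι : Type*} (D : Matrix ι ι ℂ) (i j : ι) : Prop := ∃ p, IsWalk D i j p

/-- The geodesic (weighted shortest-path) distance on `G_D`. -/
noncomputable def gDist {ι : Type*} (D : Matrix ι ι ℂ) (i j : ι) : ℝ≥0∞ :=
  ⨅ (p : List ι) (_ : IsWalk D i j p), walkLength D i p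

/-!
Each entry of `[D, π(a)]` is `D u v (a v - a u)` and is bounded by the operator norm, so a
contraction `‖[D, π(a)]‖ ≤ 1` makes `a` 1-Lipschitz with respect to the edge weights `|D u v|⁻¹`;
the triangle inequality along a walk then bounds `|a i - a j|` by the length of any walk from `i`
to `j`.
-/

lemma Matrix.norm_apply_le_norm_toEuclideanCLM {𝕜 ι : Type*} [RCLike 𝕜] [Fintype ι] [DecidableEq ι]
    (M : Matrix ι ι 𝕜) (u v : ι) :
    ‖M u v‖ ≤ ‖Matrix.toEuclideanCLM (𝕜 := 𝕜) M‖ :=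
  calc ‖M u v‖ = ‖Matrix.toEuclideanCLM (𝕜 := 𝕜) M (EuclideanSpace.single v 1) u‖ := by
        simp [EuclideanSpace.single, Matrix.mulVec_single]
    _ ≤ ‖Matrix.toEuclideanCLM (𝕜 := 𝕜) M (EuclideanSpace.single v 1)‖ := PiLp.norm_apply_le _ _
    _ ≤ ‖Matrix.toEuclideanCLM (𝕜 := 𝕜) M‖ := by
        simpa using (Matrix.toEuclideanCLM (𝕜 := 𝕜) M).le_opNorm (EuclideanSpace.single v 1)

lemma norm_apply_le_opNorm {ι : Type*} [Finite ι] (M : Matrix ι ι ℂ) (u v : ι) :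
    ‖M u v‖ ≤ opNorm M := by
  let _ := Fintype.ofFinite ι
  let _ := Classical.decEq ι
  exact M.norm_apply_le_norm_toEuclideanCLM u v

lemma commD_apply {ι : Type*} [Finite ι] (D : Matrix ι ι ℂ) (a : ι → ℂ) (u v : ι) :
    commD D a u v = D u v * (a v - a u) := by
  let _ := Fintype.ofFinite ι
  let _ := Classical.decEq ι
  simp only [commD, Matrix.sub_apply, Matrix.mul_diagonal, Matrix.diagonal_mul]
  ring

lemma edist_le_eWeight_of_opNorm_commD_le_one {ι : Type*} [Finite ι] {D : Matrix ι ι ℂ}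
    {a : ι → ℂ} (ha : opNorm (commD D a) ≤ 1) (u v : ι) :
    edist (a u) (a v) ≤ eWeight D u v := by
  have hmul : ‖D u v‖ * ‖a u - a v‖ ≤ 1 := by
    simpa [commD_apply, norm_sub_rev] using (norm_apply_le_opNorm (commD D a) u v).trans ha
  rw [eWeight, ENNReal.le_inv_iff_mul_le, edist_dist, dist_eq_norm,
    ← ENNReal.ofReal_mul (norm_nonneg _), ← ENNReal.ofReal_one]
  exact ENNReal.ofReal_le_ofReal (by linarith)

lemma edist_getLast_le_walkLength {ι α : Type*} [PseudoEMetricSpace α] {D : Matrix ι ι ℂ}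
    {a : ι → α} (ha : ∀ u v, edist (a u) (a v) ≤ eWeight D u v) :
    ∀ (u : ι) (p : List ι),
      edist (a u) (a ((u :: p).getLast (List.cons_ne_nil _ _))) ≤ walkLength D u p
  | u, [] => by simp
  | u, v :: rest => by
    rw [List.getLast_cons_cons, walkLength]
    exact (edist_triangle _ (a v) _).trans
      (add_le_add (ha u v) (edist_getLast_le_walkLength ha v rest))

theorem stmt0_general {n : ℕ} (D : Matrix (Fin n) (Fin n) ℂ) (i j : Fin n) :
    ncDist D i j ≤ gDist D i j := by
  refine iSup₂_le fun a ha => le_iInf₂ fun p hp => ?_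
  have hwalk := edist_getLast_le_walkLength (edist_le_eWeight_of_opNorm_commD_le_one ha) i p
  rwa [hp.2, edist_dist, dist_eq_norm] at hwalk

theorem stmt0 {n : ℕ} (D : Matrix (Fin n) (Fin n) ℂ)
    (hherm : D.IsHermitian) (hdiag : ∀ i, D i i = 0) (i j : Fin n) :
    ncDist D i j ≤ gDist D i j :=
  stmt0_general D i j
end

section
/- Let D be a Hermitian Dirac operator with zero diagonal on n vertices and let D' be the matrix obtained from D by setting to zero the i-th row and the i-th column. Then for all vertices j, k one has d^{D'}(j,k) ≥ d^D(j,k). -/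
open scoped ENNReal

lemma opNorm_eq' {ι : Type*} [inst1 : Fintype ι] [inst2 : DecidableEq ι] (M : Matrix ι ι ℂ) :
    opNorm M = ‖Matrix.toEuclideanCLM (𝕜 := ℂ) M‖ := by
  unfold opNorm
  rw [Subsingleton.elim (Fintype.ofFinite ι) inst1, Subsingleton.elim (Classical.decEq ι) inst2]

lemma commD_eq' {ι : Type*} [inst1 : Fintype ι] [inst2 : DecidableEq ι]
    (D : Matrix ι ι ℂ) (a : ι → ℂ) :
    commD D a = D * Matrix.diagonal a - Matrix.diagonal a * D := by
  unfold commD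
  rw [Subsingleton.elim (Fintype.ofFinite ι) inst1, Subsingleton.elim (Classical.decEq ι) inst2]

lemma opNorm_nonneg' {ι : Type*} [Fintype ι] [DecidableEq ι] (M : Matrix ι ι ℂ) :
    0 ≤ opNorm M := by rw [opNorm_eq']; exact norm_nonneg _

lemma opNorm_mul_le' {ι : Type*} [Fintype ι] [DecidableEq ι] (A B : Matrix ι ι ℂ) :
    opNorm (A * B) ≤ opNorm A * opNorm B := by
  rw [opNorm_eq', opNorm_eq', opNorm_eq', map_mul]
  exact norm_mul_le _ _

lemma opNorm_diagonal_le_one' {ι : Type*} [Fintype ι] [DecidableEq ι] (p : ι → ℂ)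
    (hp : ∀ u, ‖p u‖ ≤ 1) : opNorm (Matrix.diagonal p) ≤ 1 := by
  rw [opNorm_eq']
  apply ContinuousLinearMap.opNorm_le_bound _ zero_le_one
  intro x
  rw [one_mul]
  have hco : ∀ u, (Matrix.toEuclideanCLM (𝕜 := ℂ) (Matrix.diagonal p) x) u = p u * x u := by
    intro u
    have h2 := congrFun (Matrix.ofLp_toEuclideanCLM (𝕜 := ℂ) (Matrix.diagonal p) x) u
    simpa [Matrix.mulVec_diagonal] using h2
  rw [EuclideanSpace.norm_eq, EuclideanSpace.norm_eq]
  apply Real.sqrt_le_sqrt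
  apply Finset.sum_le_sum
  intro u _
  rw [hco]
  have h : ‖p u * x u‖ ≤ ‖x u‖ := by
    rw [norm_mul]
    calc ‖p u‖ * ‖x u‖ ≤ 1 * ‖x u‖ := by gcongr; exact hp u
    _ = ‖x u‖ := one_mul _
  exact pow_le_pow_left₀ (norm_nonneg _) h 2

theorem stmt1 {n : ℕ} (D D' : Matrix (Fin n) (Fin n) ℂ)
    (hherm : D.IsHermitian) (hdiag : ∀ i, D i i = 0) (i : Fin n)
    (hD' : D' = Matrix.of fun a b => if a = i ∨ b = i then 0 else D a b)
    (j k : Fin n) :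
    ncDist D j k ≤ ncDist D' j k := by
  set p : Fin n → ℂ := fun u => if u = i then 0 else 1 with hp
  have hfact : ∀ a : Fin n → ℂ,
      commD D' a = Matrix.diagonal p * commD D a * Matrix.diagonal p := by
    intro a
    rw [commD_eq', commD_eq']
    ext u v
    simp only [Matrix.sub_apply, Matrix.mul_diagonal, Matrix.diagonal_mul, hD', Matrix.of_apply,
      Matrix.sub_mul, Matrix.mul_sub, hp]
    by_cases hu : u = i <;> by_cases hv : v = i <;> simp [hu, hv] <;> ring
  have key : ∀ a : Fin n → ℂ, opNorm (commD D' a) ≤ opNorm (commD D a) := by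
    intro a
    rw [hfact a]
    have hdle : opNorm (Matrix.diagonal p) ≤ 1 := by
      apply opNorm_diagonal_le_one'
      intro u
      by_cases hu : u = i <;> simp [hp, hu]
    calc opNorm (Matrix.diagonal p * commD D a * Matrix.diagonal p)
        ≤ opNorm (Matrix.diagonal p * commD D a) * opNorm (Matrix.diagonal p) :=
          opNorm_mul_le' _ _
      _ ≤ opNorm (Matrix.diagonal p * commD D a) * 1 := by
          gcongr
          exact opNorm_nonneg' _
      _ = opNorm (Matrix.diagonal p * commD D a) := mul_one _
      _ ≤ opNorm (Matrix.diagonal p) * opNorm (commD D a) := opNorm_mul_le' _ _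
      _ ≤ 1 * opNorm (commD D a) := by gcongr; exact opNorm_nonneg' _
      _ = opNorm (commD D a) := one_mul _
  unfold ncDist
  refine iSup₂_le fun a ha => ?_
  exact le_iSup₂ (f := fun (a : Fin n → ℂ) (_ : opNorm (commD D' a) ≤ 1) =>
    ENNReal.ofReal ‖a j - a k‖) a ((key a).trans ha)
end

section
/- Let D be a Hermitian Dirac operator with zero diagonal on vertex set V = {1,…,n}, let V' ⊆ V, and let D_{V'} be the principal submatrix of D obtained by erasing all rows and columns corresponding to vertices not in V'. Then for all i, j ∈ V', the noncommutative distance computed from D_{V'} satisfies d^{D_{V'}}(i,j) ≥ d^D(i,j). -/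
open scoped ENNReal

lemma sum_subtype_aux {α : Type*} {R : Type*} [Fintype α] [AddCommMonoid R]
    (p : Set α) [DecidablePred (· ∈ p)] [Fintype ↥p] (f : ↥p → R) (g : α → R)
    (h1 : ∀ a (h : a ∈ p), g a = f ⟨a, h⟩) (h0 : ∀ a, a ∉ p → g a = 0) :
    ∑ a, g a = ∑ b : ↥p, f b := by
  rw [← Finset.sum_filter_add_sum_filter_not Finset.univ (· ∈ p) g]
  rw [Finset.sum_eq_zero (s := Finset.univ.filter (fun x => ¬ x ∈ p))
    (fun a ha => h0 a (by simpa using (Finset.mem_filter.mp ha).2)), add_zero]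
  rw [Finset.sum_subtype (p := (· ∈ p)) (s := Finset.univ.filter (· ∈ p)) (by simp) g]
  exact Finset.sum_congr rfl fun b _ => h1 b.1 b.2

lemma sum_subtype_le_aux {α : Type*} [Fintype α]
    (p : Set α) [DecidablePred (· ∈ p)] [Fintype ↥p] (g : α → ℝ)
    (h0 : ∀ a, 0 ≤ g a) : ∑ b : ↥p, g b.1 ≤ ∑ a, g a := by
  rw [← Finset.sum_subtype (p := (· ∈ p)) (s := Finset.univ.filter (· ∈ p)) (by simp) g]
  exact Finset.sum_le_sum_of_subset_of_nonneg (Finset.filter_subset _ _)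
    (fun a _ _ => h0 a)

lemma norm_clm_submatrix_le {m : Type*} [Fintype m] [DecidableEq m]
    (M : Matrix m m ℂ) (V' : Set m) [Fintype ↥V'] [DecidableEq ↥V'] :
    ‖Matrix.toEuclideanCLM (𝕜 := ℂ) (M.submatrix (Subtype.val : V' → m) Subtype.val)‖ ≤
      ‖Matrix.toEuclideanCLM (𝕜 := ℂ) M‖ := by
  letI : DecidablePred (· ∈ V') := Classical.decPred _
  set M' := M.submatrix (Subtype.val : V' → m) Subtype.val with hM'
  apply ContinuousLinearMap.opNorm_le_bound
  · exact norm_nonneg _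
  intro x
  set y' : m → ℂ := fun k => if h : k ∈ V' then x ⟨k, h⟩ else 0 with hy'
  set y : EuclideanSpace ℂ m := (WithLp.equiv 2 _).symm y' with hy
  have hycoord : ∀ k, y k = y' k := fun k => rfl
  have hnormy : ‖y‖ = ‖x‖ := by
    rw [EuclideanSpace.norm_eq, EuclideanSpace.norm_eq]
    congr 1
    refine sum_subtype_aux V' _ _ (fun a h => ?_) (fun a h => ?_)
    · rw [hycoord, hy']; simp [h]
    · rw [hycoord, hy']; simp [h]
  have hcoord : ∀ i : ↥V',
      (Matrix.toEuclideanCLM (𝕜 := ℂ) M' x) i = (Matrix.toEuclideanCLM (𝕜 := ℂ) M y) i.1 := by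
    intro i
    show (M'.mulVec fun j => x j) i = (M.mulVec fun k => y k) i.1
    unfold Matrix.mulVec dotProduct
    refine (sum_subtype_aux V' (fun j => M' i j * x j) (fun k => M i.1 k * y' k)
      (fun a h => ?_) (fun a h => ?_)).symm
    · simp [hM', hy', h, Matrix.submatrix_apply]
    · simp [hy', h]
  calc ‖Matrix.toEuclideanCLM (𝕜 := ℂ) M' x‖ ≤ ‖Matrix.toEuclideanCLM (𝕜 := ℂ) M y‖ := by
        rw [EuclideanSpace.norm_eq, EuclideanSpace.norm_eq]
        apply Real.sqrt_le_sqrt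
        calc ∑ i : ↥V', ‖(Matrix.toEuclideanCLM (𝕜 := ℂ) M' x) i‖ ^ 2
            = ∑ i : ↥V', ‖(Matrix.toEuclideanCLM (𝕜 := ℂ) M y) i.1‖ ^ 2 :=
              Finset.sum_congr rfl fun i _ => by rw [hcoord i]
          _ ≤ _ := sum_subtype_le_aux V' _ (fun a => pow_nonneg (norm_nonneg _) 2)
    _ ≤ ‖Matrix.toEuclideanCLM (𝕜 := ℂ) M‖ * ‖x‖ := by
        rw [← hnormy]; exact ContinuousLinearMap.le_opNorm _ _

lemma opNorm_submatrix_le {n : ℕ} (M : Matrix (Fin n) (Fin n) ℂ) (V' : Set (Fin n)) :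
    opNorm (M.submatrix (Subtype.val : V' → Fin n) Subtype.val) ≤ opNorm M := by
  unfold opNorm
  exact @norm_clm_submatrix_le (Fin n) (Fintype.ofFinite (Fin n)) (Classical.decEq (Fin n))
    M V' (Fintype.ofFinite ↥V') (Classical.decEq ↥V')

lemma commD_submatrix {n : ℕ} (D : Matrix (Fin n) (Fin n) ℂ) (V' : Set (Fin n)) (a : Fin n → ℂ) :
    commD (D.submatrix (Subtype.val : V' → Fin n) Subtype.val) (fun k => a k.1) =
      (commD D a).submatrix (Subtype.val : V' → Fin n) Subtype.val := by
  unfold commD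
  ext i j
  simp [Matrix.sub_apply, Matrix.mul_diagonal, Matrix.diagonal_mul, Matrix.submatrix_apply]

theorem stmt2 {n : ℕ} (D : Matrix (Fin n) (Fin n) ℂ)
    (hherm : D.IsHermitian) (hdiag : ∀ i, D i i = 0)
    (V' : Set (Fin n)) (i j : V') :
    ncDist D (i : Fin n) (j : Fin n) ≤
      ncDist (D.submatrix (Subtype.val : V' → Fin n) Subtype.val) i j := by
  unfold ncDist
  refine iSup_le fun a => iSup_le fun ha => ?_
  have h : opNorm (commD (D.submatrix (Subtype.val : V' → Fin n) Subtype.val)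
      (fun k => a k.1)) ≤ 1 := by
    rw [commD_submatrix]
    exact le_trans (opNorm_submatrix_le _ _) ha
  exact le_iSup₂_of_le (fun k : ↥V' => a k.1) h le_rfl
end
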